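/- Let f : Ω → ℝ be continuous, λ > 0 a real number, h : Ω → ℝ continuous, and ν a Borel probability measure on Ω such that L_f h = λh and ∫_Ω L_f φ dν = λ ∫_Ω φ dν for every continuous φ. Then for all continuous φ₁, φ₂ : Ω → ℝ and every n ≥ 1: | ∫_Ω (φ₁∘σ^n)·φ₂·h dν − (∫_Ω φ₁·h dν)(∫_Ω φ₂·h dν) | ≤ ( ∫_Ω |φ₁| dν ) · ‖ λ^{−n} L_f^n( φ₂·h − h·∫_Ω φ₂·h dν ) ‖_0. -/

import Mathlib

/-!
Since `L(φ∘σ · g) = φ · L g` and `ν` is an eigenmeasure of the dual operator, the Koopman operator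
`φ ↦ φ ∘ σⁿ` is adjoint to `λ⁻ⁿ Lⁿ` for the pairing `(φ, ψ) ↦ ∫ φ ψ dν`:
`∫ (φ∘σⁿ) ψ dν = ∫ φ · λ⁻ⁿ Lⁿ ψ dν`. For `ψ = h` this says that `h ν` is `σ`-invariant, so the
correlation equals `∫ (φ₁∘σⁿ) ψ dν` with `ψ = φ₂ h − h ∫ φ₂ h dν`, i.e. `∫ φ₁ · λ⁻ⁿ Lⁿ ψ dν`,
which is at most `∫ |φ₁| dν · ‖λ⁻ⁿ Lⁿ ψ‖₀`.
-/

open MeasureTheory Filter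

noncomputable section

namespace Paper

variable {M : Type*} [MetricSpace M]

/-- Prepend one symbol: `ax = (a, x₁, x₂, …)`. -/
def cons (a : M) (x : ℕ → M) : ℕ → M
  | 0 => a
  | n + 1 => x n

/-- Prepend a finite word `a ∈ Mⁿ`. -/
def consW {n : ℕ} (a : Fin n → M) (x : ℕ → M) : ℕ → M :=
  fun k => if h : k < n then a ⟨k, h⟩ else x (k - n)

/-- The left shift `σ`. -/
def shift (x : ℕ → M) : ℕ → M := fun n => x (n + 1)

/-- Birkhoff sum `Sₙ f = f + f∘σ + … + f∘σ^{n-1}`. -/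
def birk (f : (ℕ → M) → ℝ) (n : ℕ) (x : ℕ → M) : ℝ :=
  ∑ i ∈ Finset.range n, f (shift^[i] x)

/-- The metric `d_Ω(x,y) = Σ_{n≥1} 2^{-n} d(xₙ,yₙ)`. -/
def dOmega (x y : ℕ → M) : ℝ :=
  ∑' n : ℕ, (1 / 2 : ℝ) ^ (n + 1) * dist (x n) (y n)

/-- `dₙ(x,y) = max_{0 ≤ k < n} d_Ω(σᵏx, σᵏy)`. -/
def dN (n : ℕ) (x y : ℕ → M) : ℝ :=
  ⨆ k : Fin n, dOmega (shift^[(k : ℕ)] x) (shift^[(k : ℕ)] y)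

/-- The (strong) Walters condition. -/
def Walters (f : (ℕ → M) → ℝ) : Prop :=
  ∀ ε : ℝ, 0 < ε → ∃ η : ℝ, 0 < η ∧ ∀ n : ℕ, 1 ≤ n → ∀ x y : ℕ → M,
    dN n x y ≤ η → |birk f n x - birk f n y| ≤ ε

/-- `C_f(x,y) = sup_{n ≥ 1} sup_{a ∈ Mⁿ} (Sₙf(ax) − Sₙf(ay))`, a value in `(−∞,+∞]`. -/
def Cf (f : (ℕ → M) → ℝ) (x y : ℕ → M) : EReal :=
  ⨆ n : ℕ, ⨆ a : Fin (n + 1) → M,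
    ((birk f (n + 1) (consW a x) - birk f (n + 1) (consW a y) : ℝ) : EReal)

/-- The weak Walters condition. -/
def WeakWalters (f : (ℕ → M) → ℝ) : Prop :=
  ∀ ε : ℝ, 0 < ε → ∃ δ : ℝ, 0 < δ ∧ ∀ x y : ℕ → M,
    dOmega x y ≤ δ → Cf f x y ≤ (ε : EReal)

variable [MeasurableSpace M]

/-- The Ruelle operator `L_f φ(x) = ∫_M e^{f(ax)} φ(ax) dμ(a)`. -/
def ruelle (μ : Measure M) (f : (ℕ → M) → ℝ) (φ : (ℕ → M) → ℝ) : (ℕ → M) → ℝ :=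
  fun x => ∫ a, Real.exp (f (cons a x)) * φ (cons a x) ∂μ

/-- The Ruelle operator with weight `g`: `Lφ(x) = ∫_M g(ax) φ(ax) dμ(a)`. -/
def ruelleG (μ : Measure M) (g : (ℕ → M) → ℝ) (φ : (ℕ → M) → ℝ) : (ℕ → M) → ℝ :=
  fun x => ∫ a, g (cons a x) * φ (cons a x) ∂μ

/-- The sup norm `‖·‖₀` of a real function on `Ω`. -/
def supNorm (ψ : (ℕ → M) → ℝ) : ℝ := ⨆ x : ℕ → M, |ψ x|


end Paper

namespace Paper

variable {M : Type*}

lemma shift_cons (a : M) (x : ℕ → M) : shift (cons a x) = x := rfl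

section Topology

variable [TopologicalSpace M]

lemma continuous_shift : Continuous (shift (M := M)) :=
  continuous_pi fun n => continuous_apply (n + 1)

lemma continuous_cons : Continuous (fun p : M × (ℕ → M) => cons p.1 p.2) := by
  refine continuous_pi fun k => ?_
  cases k with
  | zero => exact continuous_fst
  | succ k => exact (continuous_apply k).comp continuous_snd

variable [CompactSpace M]

lemma integrable_of_continuous [MeasurableSpace (ℕ → M)] [OpensMeasurableSpace (ℕ → M)]
    {φ : (ℕ → M) → ℝ} (hφ : Continuous φ) (ν : Measure (ℕ → M)) [IsFiniteMeasure ν] :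
    Integrable φ ν :=
  hφ.integrable_of_hasCompactSupport (HasCompactSupport.of_compactSpace _)

lemma le_supNorm {ψ : (ℕ → M) → ℝ} (hψ : Continuous ψ) (x : ℕ → M) : |ψ x| ≤ supNorm ψ :=
  le_ciSup (isCompact_range hψ.abs).bddAbove x

lemma abs_integral_mul_le_integral_abs_mul_supNorm
    [MeasurableSpace (ℕ → M)] [OpensMeasurableSpace (ℕ → M)]
    (ν : Measure (ℕ → M)) [IsFiniteMeasure ν] {φ ψ : (ℕ → M) → ℝ}
    (hφ : Continuous φ) (hψ : Continuous ψ) :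
    |∫ x, φ x * ψ x ∂ν| ≤ (∫ x, |φ x| ∂ν) * supNorm ψ :=
  calc |∫ x, φ x * ψ x ∂ν|
      ≤ ∫ x, |φ x| * |ψ x| ∂ν := by
        simpa only [Real.norm_eq_abs, abs_mul] using
          norm_integral_le_integral_norm (μ := ν) (fun x => φ x * ψ x)
    _ ≤ ∫ x, |φ x| * supNorm ψ ∂ν :=
        integral_mono (integrable_of_continuous (hφ.abs.mul hψ.abs) ν)
          (integrable_of_continuous (hφ.abs.mul continuous_const) ν)
          fun x => mul_le_mul_of_nonneg_left (le_supNorm hψ x) (abs_nonneg _)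
    _ = (∫ x, |φ x| ∂ν) * supNorm ψ := integral_mul_const _ _

end Topology

section Ruelle

variable [MeasurableSpace M]

lemma ruelle_const_mul (μ : Measure M) (f : (ℕ → M) → ℝ) (c : ℝ) (g : (ℕ → M) → ℝ) :
    ruelle μ f (fun y => c * g y) = fun x => c * ruelle μ f g x := by
  funext x
  simp only [ruelle, ← integral_const_mul, mul_left_comm c]

lemma ruelle_comp_shift_mul (μ : Measure M) (f φ g : (ℕ → M) → ℝ) :
    ruelle μ f (fun y => φ (shift y) * g y) = fun x => φ x * ruelle μ f g x := by
  funext x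
  simp only [ruelle, shift_cons, ← integral_const_mul, mul_left_comm (φ x)]

lemma ruelle_iterate_comp_shift_iterate_mul (μ : Measure M) (f φ g : (ℕ → M) → ℝ) (n : ℕ) :
    (ruelle μ f)^[n] (fun y => φ (shift^[n] y) * g y)
      = fun x => φ x * (ruelle μ f)^[n] g x := by
  induction n generalizing g with
  | zero => rfl
  | succ n ih =>
    simp only [Function.iterate_succ_apply, ← ih]
    exact congrArg _ (ruelle_comp_shift_mul μ f (fun y => φ (shift^[n] y)) g)

lemma ruelle_iterate_of_eigen {μ : Measure M} {f h : (ℕ → M) → ℝ} {lam : ℝ}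
    (heig : ∀ x, ruelle μ f h x = lam * h x) (n : ℕ) :
    (ruelle μ f)^[n] h = fun x => lam ^ n * h x := by
  induction n with
  | zero => simp
  | succ n ih =>
    funext x
    simp only [Function.iterate_succ_apply', ih, ruelle_const_mul, heig]
    ring

end Ruelle

section CompactRuelle

variable [MetricSpace M] [CompactSpace M] [MeasurableSpace M] [BorelSpace M]

lemma continuous_ruelle (μ : Measure M) [IsFiniteMeasure μ] {f φ : (ℕ → M) → ℝ}
    (hf : Continuous f) (hφ : Continuous φ) : Continuous (ruelle μ f φ) := by
  have hcons : Continuous (fun p : (ℕ → M) × M => cons p.2 p.1) :=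
    continuous_cons.comp continuous_swap
  have := continuous_parametric_integral_of_continuous (μ := μ)
    (f := fun x a => Real.exp (f (cons a x)) * φ (cons a x))
    ((Real.continuous_exp.comp (hf.comp hcons)).mul (hφ.comp hcons)) isCompact_univ
  rw [Measure.restrict_univ] at this
  exact this

lemma continuous_ruelle_iterate (μ : Measure M) [IsFiniteMeasure μ] {f φ : (ℕ → M) → ℝ}
    (hf : Continuous f) (hφ : Continuous φ) (n : ℕ) : Continuous ((ruelle μ f)^[n] φ) := by
  induction n generalizing φ with
  | zero => exact hφ
  | succ n ih => exact ih (continuous_ruelle μ hf hφ)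

lemma integral_ruelle_iterate (μ : Measure M) [IsFiniteMeasure μ] {f : (ℕ → M) → ℝ}
    (hf : Continuous f) {lam : ℝ} {ν : Measure (ℕ → M)}
    (heig : ∀ φ : (ℕ → M) → ℝ, Continuous φ → ∫ z, ruelle μ f φ z ∂ν = lam * ∫ z, φ z ∂ν)
    {φ : (ℕ → M) → ℝ} (hφ : Continuous φ) (n : ℕ) :
    ∫ z, (ruelle μ f)^[n] φ z ∂ν = lam ^ n * ∫ z, φ z ∂ν := by
  induction n generalizing φ with
  | zero => simp
  | succ n ih =>
    rw [Function.iterate_succ_apply, ih (continuous_ruelle μ hf hφ), heig φ hφ, pow_succ,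
      mul_assoc]

lemma integral_comp_shift_iterate_mul (μ : Measure M) [IsFiniteMeasure μ]
    {f : (ℕ → M) → ℝ} (hf : Continuous f) {lam : ℝ} (hlam : lam ≠ 0) {ν : Measure (ℕ → M)}
    (heig : ∀ φ : (ℕ → M) → ℝ, Continuous φ → ∫ z, ruelle μ f φ z ∂ν = lam * ∫ z, φ z ∂ν)
    {φ ψ : (ℕ → M) → ℝ} (hφ : Continuous φ) (hψ : Continuous ψ) (n : ℕ) :
    ∫ x, φ (shift^[n] x) * ψ x ∂ν = ∫ x, φ x * ((lam ^ n)⁻¹ * (ruelle μ f)^[n] ψ x) ∂ν := by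
  apply mul_left_cancel₀ (pow_ne_zero n hlam)
  rw [← integral_ruelle_iterate μ hf heig (φ := fun x => φ (shift^[n] x) * ψ x)
      ((hφ.comp (continuous_shift.iterate n)).mul hψ),
    ruelle_iterate_comp_shift_iterate_mul, ← integral_const_mul]
  congr 1
  funext x
  field_simp

lemma integral_comp_shift_iterate_mul_eigen (μ : Measure M) [IsFiniteMeasure μ]
    {f h : (ℕ → M) → ℝ} (hf : Continuous f) (hh : Continuous h) {lam : ℝ} (hlam : lam ≠ 0)
    (heigf : ∀ x, ruelle μ f h x = lam * h x) {ν : Measure (ℕ → M)}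
    (heigm : ∀ φ : (ℕ → M) → ℝ, Continuous φ → ∫ z, ruelle μ f φ z ∂ν = lam * ∫ z, φ z ∂ν)
    {φ : (ℕ → M) → ℝ} (hφ : Continuous φ) (n : ℕ) :
    ∫ x, φ (shift^[n] x) * h x ∂ν = ∫ x, φ x * h x ∂ν := by
  rw [integral_comp_shift_iterate_mul μ hf hlam heigm hφ hh, ruelle_iterate_of_eigen heigf]
  congr 1
  funext x
  field_simp

end CompactRuelle

variable [MetricSpace M] [MeasurableSpace M]

theorem statement17_general [CompactSpace M] [BorelSpace M]
    (μ : Measure M) [IsProbabilityMeasure μ]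
    (f : (ℕ → M) → ℝ) (hf : Continuous f)
    (lam : ℝ) (hlam : 0 < lam)
    (h : (ℕ → M) → ℝ) (hh : Continuous h)
    (ν : Measure (ℕ → M)) [IsProbabilityMeasure ν]
    (heigf : ∀ x, ruelle μ f h x = lam * h x)
    (heigm : ∀ φ : (ℕ → M) → ℝ, Continuous φ →
      ∫ z, ruelle μ f φ z ∂ν = lam * ∫ z, φ z ∂ν)
    (φ₁ φ₂ : (ℕ → M) → ℝ) (hφ₁ : Continuous φ₁) (hφ₂ : Continuous φ₂)
    (n : ℕ) :
    |(∫ x, φ₁ (shift^[n] x) * φ₂ x * h x ∂ν) -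
        (∫ x, φ₁ x * h x ∂ν) * (∫ x, φ₂ x * h x ∂ν)|
      ≤ (∫ x, |φ₁ x| ∂ν) *
        supNorm (fun x => (lam ^ n)⁻¹ *
          ((ruelle μ f)^[n]
            (fun y => φ₂ y * h y - h y * ∫ z, φ₂ z * h z ∂ν)) x) := by
  set c := ∫ z, φ₂ z * h z ∂ν
  set ψ : (ℕ → M) → ℝ := fun y => φ₂ y * h y - h y * c
  have hψ : Continuous ψ := (hφ₂.mul hh).sub (hh.mul continuous_const)
  have hφ₁σ : Continuous fun x => φ₁ (shift^[n] x) := hφ₁.comp (continuous_shift.iterate n)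
  have hcentre : (∫ x, φ₁ (shift^[n] x) * φ₂ x * h x ∂ν) - (∫ x, φ₁ x * h x ∂ν) * c
      = ∫ x, φ₁ (shift^[n] x) * ψ x ∂ν := by
    rw [← integral_comp_shift_iterate_mul_eigen μ hf hh hlam.ne' heigf heigm hφ₁ n,
      ← integral_mul_const, ← integral_sub (f := fun x => φ₁ (shift^[n] x) * φ₂ x * h x)
        (g := fun x => φ₁ (shift^[n] x) * h x * c)
        (integrable_of_continuous ((hφ₁σ.mul hφ₂).mul hh) ν)
        (integrable_of_continuous ((hφ₁σ.mul hh).mul continuous_const) ν)]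
    congr 1
    funext x
    ring
  rw [hcentre, integral_comp_shift_iterate_mul μ hf hlam.ne' heigm hφ₁ hψ]
  exact abs_integral_mul_le_integral_abs_mul_supNorm ν hφ₁
    (continuous_const.mul (continuous_ruelle_iterate μ hf hψ n))

/-- Let `f` be continuous, `λ > 0`, `h` continuous and `ν` a Borel
probability measure with `L_f h = λ h` and `∫ L_f φ dν = λ ∫ φ dν` for all continuous
`φ`.  Then for all continuous `φ₁, φ₂` and every `n ≥ 1`:
`|∫ (φ₁∘σⁿ)·φ₂·h dν − (∫ φ₁·h dν)(∫ φ₂·h dν)|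
  ≤ (∫ |φ₁| dν) · ‖λ^{-n} L_fⁿ(φ₂·h − h·∫ φ₂·h dν)‖₀`. -/
theorem statement17 [CompactSpace M] [BorelSpace M]
    (μ : Measure M) [IsProbabilityMeasure μ]
    (f : (ℕ → M) → ℝ) (hf : Continuous f)
    (lam : ℝ) (hlam : 0 < lam)
    (h : (ℕ → M) → ℝ) (hh : Continuous h)
    (ν : Measure (ℕ → M)) [IsProbabilityMeasure ν]
    (heigf : ∀ x, ruelle μ f h x = lam * h x)
    (heigm : ∀ φ : (ℕ → M) → ℝ, Continuous φ →
      ∫ z, ruelle μ f φ z ∂ν = lam * ∫ z, φ z ∂ν)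
    (φ₁ φ₂ : (ℕ → M) → ℝ) (hφ₁ : Continuous φ₁) (hφ₂ : Continuous φ₂)
    (n : ℕ) (hn : 1 ≤ n) :
    |(∫ x, φ₁ (shift^[n] x) * φ₂ x * h x ∂ν) -
        (∫ x, φ₁ x * h x ∂ν) * (∫ x, φ₂ x * h x ∂ν)|
      ≤ (∫ x, |φ₁ x| ∂ν) *
        supNorm (fun x => (lam ^ n)⁻¹ *
          ((ruelle μ f)^[n]
            (fun y => φ₂ y * h y - h y * ∫ z, φ₂ z * h z ∂ν)) x) :=
  statement17_general μ f hf lam hlam h hh ν heigf heigm φ₁ φ₂ hφ₁ hφ₂ n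

end Paper
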